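/- Let D ⊆ ℂ be a disc centered at 0, B ⊆ ℂ×ℝ a ball centered at 0, τ ≥ 1 an integer, and φ : D×B → ℝ a smooth function such that for every z₁ ∈ D: ∂_y φ(z₁,0,0) = 0 (y the ℝ-variable of B) and ∂^j_{z₂}∂^k_{z̄₂}φ(z₁,0,0) = 0 for all j,k with j+k < τ. Then there exist a disc D′ ⊆ D centered at 0, ε > 0, and C > 0 such that for all z₁ ∈ D′ and all (z₂,y) ∈ ℂ×ℝ with |z₂|² + y² < ε²: φ(z₁,z₂,y) ≤ C|z₂|^τ + C|y|. -/

import Mathlib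

open Complex Metric Set MeasureTheory Filter Asymptotics Topology

noncomputable section

/-- One-variable Wirtinger derivative ∂/∂z. -/
def w1 (f : ℂ → ℂ) (z : ℂ) : ℂ :=
  (fderiv ℝ f z 1 - Complex.I * fderiv ℝ f z Complex.I) / 2

/-- One-variable Wirtinger derivative ∂/∂z̄. -/
def w1bar (f : ℂ → ℂ) (z : ℂ) : ℂ :=
  (fderiv ℝ f z 1 + Complex.I * fderiv ℝ f z Complex.I) / 2

/-- Wirtinger derivative ∂/∂z₂ for functions on ℂ × ℂ × ℝ. -/
def Dz2 (f : ℂ × ℂ × ℝ → ℂ) : ℂ × ℂ × ℝ → ℂ :=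
  fun p => w1 (fun w => f (p.1, w, p.2.2)) p.2.1

/-- Wirtinger derivative ∂/∂z̄₂ for functions on ℂ × ℂ × ℝ. -/
def Dz2bar (f : ℂ × ℂ × ℝ → ℂ) : ℂ × ℂ × ℝ → ℂ :=
  fun p => w1bar (fun w => f (p.1, w, p.2.2)) p.2.1

/-- Partial derivative in the real variable y for functions on ℂ × ℂ × ℝ. -/
def Dy (f : ℂ × ℂ × ℝ → ℂ) : ℂ × ℂ × ℝ → ℂ :=
  fun p => fderiv ℝ (fun y => f (p.1, p.2.1, y)) p.2.2 1

/-- The mixed Wirtinger derivative ∂^j_{z₂}∂^k_{z̄₂} φ evaluated at (z₁, 0, 0). -/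
def mixedD (φ : ℂ × ℂ × ℝ → ℝ) (j k : ℕ) (z₁ : ℂ) : ℂ :=
  (Dz2^[j] (Dz2bar^[k] (fun p => (φ p : ℂ)))) (z₁, 0, 0)

/-- Complex coordinate directions in ℂ³. -/
def e3 : Fin 3 → ℂ → ℂ × ℂ × ℂ := ![fun c => (c, 0, 0), fun c => (0, c, 0), fun c => (0, 0, c)]

/-- Wirtinger derivative ∂/∂z_j on ℂ³. -/
def wd3 (j : Fin 3) (f : ℂ × ℂ × ℂ → ℂ) (z : ℂ × ℂ × ℂ) : ℂ :=
  (fderiv ℝ f z (e3 j 1) - Complex.I * fderiv ℝ f z (e3 j Complex.I)) / 2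

/-- Wirtinger derivative ∂/∂z̄_j on ℂ³. -/
def wd3bar (j : Fin 3) (f : ℂ × ℂ × ℂ → ℂ) (z : ℂ × ℂ × ℂ) : ℂ :=
  (fderiv ℝ f z (e3 j 1) + Complex.I * fderiv ℝ f z (e3 j Complex.I)) / 2

/-- The Euclidean ball of radius `s` centered at `0` in ℂ × ℝ. -/
def ballCR (s : ℝ) : Set (ℂ × ℝ) := {p | ‖p.1‖ ^ 2 + p.2 ^ 2 < s ^ 2}

/-- The "box" U = {z : z₁ ∈ D, (z₂, Im z₃) ∈ B, |Re z₃| < t}. -/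
def Ubox (r s t : ℝ) : Set (ℂ × ℂ × ℂ) :=
  {z | z.1 ∈ Metric.ball (0 : ℂ) r ∧ (z.2.1, z.2.2.im) ∈ ballCR s ∧ |z.2.2.re| < t}

/-- The graph domain Ω = {z ∈ U : Re z₃ > φ(z₁, z₂, Im z₃)}. -/
def GraphDomain (r s t : ℝ) (φ : ℂ × ℂ × ℝ → ℝ) : Set (ℂ × ℂ × ℂ) :=
  {z ∈ Ubox r s t | φ (z.1, z.2.1, z.2.2.im) < z.2.2.re}

/-- The defining function ρ(z) = φ(z₁, z₂, Im z₃) − Re z₃ (ℂ-valued). -/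
def graphRho (φ : ℂ × ℂ × ℝ → ℝ) : ℂ × ℂ × ℂ → ℂ :=
  fun z => (φ (z.1, z.2.1, z.2.2.im) : ℂ) - (z.2.2.re : ℂ)

/-- Pseudoconvexity of the graph domain at its graph boundary. -/
def PseudoconvexGraph (r s t : ℝ) (φ : ℂ × ℂ × ℝ → ℝ) : Prop :=
  ∀ z : ℂ × ℂ × ℂ, z.1 ∈ Metric.ball (0 : ℂ) r → (z.2.1, z.2.2.im) ∈ ballCR s →
    |z.2.2.re| < t → z.2.2.re = φ (z.1, z.2.1, z.2.2.im) →
    ∀ u : Fin 3 → ℂ,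
      (∑ j, wd3 j (graphRho φ) z * u j) = 0 →
      0 ≤ (∑ j, ∑ k, wd3 j (wd3bar k (graphRho φ)) z * u j * (starRingEnd ℂ) (u k)).re

/-- Biholomorphism of `V` onto `U`. -/
def Biholo (V U : Set (ℂ × ℂ × ℂ)) (Φ : ℂ × ℂ × ℂ → ℂ × ℂ × ℂ) : Prop :=
  DifferentiableOn ℂ Φ V ∧ Set.BijOn Φ V U ∧
    ∃ Ψ : ℂ × ℂ × ℂ → ℂ × ℂ × ℂ, DifferentiableOn ℂ Ψ U ∧
      (∀ z ∈ V, Ψ (Φ z) = z) ∧ (∀ w ∈ U, Φ (Ψ w) = w)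

open scoped ContDiff ComplexConjugate

/-! Extend `φ` by a bump function to a smooth function on `ℂ × ℂ × ℝ` that agrees with it near
the origin. The mean value inequality in `y` gives `|φ(z₁,z₂,y) - φ(z₁,z₂,0)| ≤ C |y|`. On the
real line `t ↦ (z₁, t z₂, 0)` the derivative of order `m` is a combination of the Wirtinger
derivatives `∂^j ∂̄^k φ` with `j + k = m`, so it vanishes at `t = 0` for `m < τ`, and Taylor's
formula bounds `φ(z₁,z₂,0)` by `C |z₂|^τ`. Compactness makes both constants uniform in `z₁`. -/

theorem exists_contDiff_eqOn_closedBall {E F : Type*} [NormedAddCommGroup E] [NormedSpace ℝ E]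
    [HasContDiffBump E] [NormedAddCommGroup F] [NormedSpace ℝ F] {U : Set E} (hU : IsOpen U)
    {f : E → F} {n : ℕ∞} (hf : ContDiffOn ℝ n f U) {c : E} {ρ R : ℝ} (hρ : 0 < ρ) (hρR : ρ < R)
    (hR : closedBall c R ⊆ U) : ∃ g : E → F, ContDiff ℝ n g ∧ EqOn g f (closedBall c ρ) := by
  let χ : ContDiffBump c := ⟨ρ, R, hρ, hρR⟩
  refine ⟨fun x => χ x • f x, contDiff_iff_contDiffAt.2 fun x => ?_,
    fun x hx => by simp [χ.one_of_mem_closedBall hx]⟩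
  by_cases hx : x ∈ U
  · exact χ.contDiffAt.smul (hf.contDiffAt (hU.mem_nhds hx))
  · have hχ : (χ : E → ℝ) =ᶠ[𝓝 x] 0 := by
      rw [← notMem_tsupport_iff_eventuallyEq, χ.tsupport_eq]
      exact fun hxR => hx (hR hxR)
    exact (contDiffAt_const (c := (0 : F))).congr_of_eventuallyEq
      (hχ.mono fun y hy => by simp [hy])

theorem ContDiff.comp_add_smul {E F : Type*} [NormedAddCommGroup E] [NormedSpace ℝ E]
    [NormedAddCommGroup F] [NormedSpace ℝ F] {f : E → F} {n : WithTop ℕ∞} (hf : ContDiff ℝ n f)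
    (p u : E) : ContDiff ℝ n (fun t : ℝ => f (p + t • u)) :=
  hf.comp (contDiff_const.add (contDiff_id.smul contDiff_const))

theorem norm_iteratedDeriv_comp_add_smul_le {E F : Type*} [NormedAddCommGroup E]
    [NormedSpace ℝ E] [NormedAddCommGroup F] [NormedSpace ℝ F] {G : E → F} {n : WithTop ℕ∞}
    (hG : ContDiff ℝ n G) {m : ℕ} (hm : m ≤ n) (p u : E) (t : ℝ) :
    ‖iteratedDeriv m (fun t : ℝ => G (p + t • u)) t‖ ≤
      ‖iteratedFDeriv ℝ m G (p + t • u)‖ * ‖u‖ ^ m := by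
  have hcomp : (fun t : ℝ => G (p + t • u)) =
      (fun v => G (p + v)) ∘ ContinuousLinearMap.toSpanSingleton ℝ u := rfl
  rw [iteratedDeriv_eq_iteratedFDeriv, hcomp, ContinuousLinearMap.iteratedFDeriv_comp_right _
    (f := fun v => G (p + v)) (hG.comp (contDiff_const.add contDiff_id)) t hm,
    iteratedFDeriv_comp_add_left]
  simp only [ContinuousMultilinearMap.compContinuousLinearMap_apply,
    ContinuousLinearMap.toSpanSingleton_apply_one]
  exact (iteratedFDeriv ℝ m G (p + t • u)).le_opNorm_mul_pow_of_le (pi_norm_const_le u)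

theorem norm_le_of_iteratedDeriv_eq_zero {E : Type*} [NormedAddCommGroup E] [NormedSpace ℝ E]
    {h : ℝ → E} {τ : ℕ} (hh : ContDiff ℝ τ h) (hvan : ∀ m < τ, iteratedDeriv m h 0 = 0) {M : ℝ}
    (hM : ∀ t ∈ Icc (0 : ℝ) 1, ‖iteratedDeriv τ h t‖ ≤ M) : ‖h 1‖ ≤ M := by
  have hIcc : UniqueDiffOn ℝ (Icc (0 : ℝ) 1) := uniqueDiffOn_Icc zero_lt_one
  have hwithin (m : ℕ) (hm : m ≤ τ) {t : ℝ} (ht : t ∈ Icc (0 : ℝ) 1) :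
      iteratedDerivWithin m h (Icc 0 1) t = iteratedDeriv m h t :=
    iteratedDerivWithin_eq_iteratedDeriv hIcc ((hh.of_le (mod_cast hm)).contDiffAt) ht
  cases τ with
  | zero => simpa using hM 1 (right_mem_Icc.2 zero_le_one)
  | succ n =>
    have htaylor : taylorWithinEval h n (Icc 0 1) 0 1 = 0 := by
      rw [taylor_within_apply]
      refine Finset.sum_eq_zero fun m hm => ?_
      have hm : m < n + 1 := Finset.mem_range.1 hm
      rw [hwithin m hm.le (left_mem_Icc.2 zero_le_one), hvan m hm, smul_zero]
    have hbound := taylor_mean_remainder_bound zero_le_one hh.contDiffOn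
      (right_mem_Icc.2 zero_le_one) fun t ht => (hwithin (n + 1) le_rfl ht).symm ▸ hM t ht
    have hM0 : 0 ≤ M := (norm_nonneg _).trans (hM 0 (left_mem_Icc.2 zero_le_one))
    rw [htaylor, sub_zero, sub_zero, one_pow, mul_one] at hbound
    exact hbound.trans (div_le_self hM0 (mod_cast n.factorial_pos))

section Wirtinger

variable {f : ℂ → ℂ}

theorem fderiv_apply_eq_w1_add_w1bar (f : ℂ → ℂ) (z a : ℂ) :
    fderiv ℝ f z a = a * w1 f z + conj a * w1bar f z := by
  have ha : a = a.re • (1 : ℂ) + a.im • I := by simp [Complex.real_smul, Complex.re_add_im]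
  have hconj : conj a = a.re - a.im * I := by apply Complex.ext <;> simp
  rw [hconj, w1, w1bar]
  conv_lhs => rw [ha, map_add, map_smul, map_smul, Complex.real_smul, Complex.real_smul]
  linear_combination (fderiv ℝ f z 1 - I * fderiv ℝ f z I) / 2 * re_add_im a
    + a.im * fderiv ℝ f z I * I_sq

theorem w1_eventuallyEq {g : ℂ → ℂ} {z : ℂ} (h : f =ᶠ[𝓝 z] g) : w1 f =ᶠ[𝓝 z] w1 g :=
  (h.fderiv (𝕜 := ℝ)).mono fun x hx => by simp only [w1, hx]

theorem w1bar_eventuallyEq {g : ℂ → ℂ} {z : ℂ} (h : f =ᶠ[𝓝 z] g) :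
    w1bar f =ᶠ[𝓝 z] w1bar g :=
  (h.fderiv (𝕜 := ℝ)).mono fun x hx => by simp only [w1bar, hx]

theorem iterate_w1_iterate_w1bar_eventuallyEq {g : ℂ → ℂ} {z : ℂ} (h : f =ᶠ[𝓝 z] g)
    (j k : ℕ) : w1^[j] (w1bar^[k] f) =ᶠ[𝓝 z] w1^[j] (w1bar^[k] g) := by
  have hk : w1bar^[k] f =ᶠ[𝓝 z] w1bar^[k] g := by
    induction k with
    | zero => exact h
    | succ k ih => simpa only [Function.iterate_succ_apply'] using w1bar_eventuallyEq ih
  induction j with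
  | zero => exact hk
  | succ j ih => simpa only [Function.iterate_succ_apply'] using w1_eventuallyEq ih

theorem contDiff_w1 (hf : ContDiff ℝ ∞ f) : ContDiff ℝ ∞ (w1 f) := by
  have hD : ContDiff ℝ ∞ (fderiv ℝ f) := hf.fderiv_right le_rfl
  exact ((hD.clm_apply contDiff_const).sub
    (contDiff_const.mul (hD.clm_apply contDiff_const))).div_const 2

theorem contDiff_w1bar (hf : ContDiff ℝ ∞ f) : ContDiff ℝ ∞ (w1bar f) := by
  have hD : ContDiff ℝ ∞ (fderiv ℝ f) := hf.fderiv_right le_rfl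
  exact ((hD.clm_apply contDiff_const).add
    (contDiff_const.mul (hD.clm_apply contDiff_const))).div_const 2

theorem contDiff_iterate_w1_iterate_w1bar (hf : ContDiff ℝ ∞ f) (j k : ℕ) :
    ContDiff ℝ ∞ (w1^[j] (w1bar^[k] f)) := by
  have hk : ContDiff ℝ ∞ (w1bar^[k] f) := by
    induction k with
    | zero => exact hf
    | succ k ih => simpa only [Function.iterate_succ_apply'] using contDiff_w1bar ih
  induction j with
  | zero => exact hk
  | succ j ih => simpa only [Function.iterate_succ_apply'] using contDiff_w1 ih

/-- Both mixed second Wirtinger derivatives equal a quarter of the Laplacian. -/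
theorem w1_w1bar_comm (hf : ContDiff ℝ 2 f) : w1 (w1bar f) = w1bar (w1 f) := by
  funext z
  set D2 := fderiv ℝ (fderiv ℝ f) z
  have hD : ContDiff ℝ 1 (fderiv ℝ f) := hf.fderiv_right (by norm_num)
  have hdiff (v : ℂ) : DifferentiableAt ℝ (fun y => fderiv ℝ f y v) z :=
    (hD.differentiable one_ne_zero z).clm_apply (differentiableAt_const v)
  have hdir (v w : ℂ) : fderiv ℝ (fun y => fderiv ℝ f y v) z w = D2 w v := by
    rw [fderiv_clm_apply (hD.differentiable one_ne_zero z) (differentiableAt_const v)]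
    simp [D2]
  have hsymm : D2 I 1 = D2 1 I := (hf.contDiffAt.isSymmSndFDerivAt (by simp)).eq I 1
  have hcomb (c d : ℂ) (w : ℂ) :
      fderiv ℝ (fun y => c * fderiv ℝ f y 1 + d * fderiv ℝ f y I) z w =
        c * D2 w 1 + d * D2 w I := by
    rw [fderiv_fun_add ((hdiff 1).const_mul c) ((hdiff I).const_mul d),
      fderiv_const_mul (hdiff 1), fderiv_const_mul (hdiff I)]
    simp [hdir]
  have hw1 : w1 f = fun y => 2⁻¹ * fderiv ℝ f y 1 + (-I / 2) * fderiv ℝ f y I := by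
    funext y; rw [w1]; ring
  have hw1bar : w1bar f = fun y => 2⁻¹ * fderiv ℝ f y 1 + (I / 2) * fderiv ℝ f y I := by
    funext y; rw [w1bar]; ring
  rw [hw1, hw1bar, w1, w1bar, hcomb, hcomb, hcomb, hcomb, hsymm]
  ring

theorem w1bar_iterate_w1 (hf : ContDiff ℝ ∞ f) (j : ℕ) :
    w1bar (w1^[j] f) = w1^[j] (w1bar f) := by
  induction j generalizing f with
  | zero => rfl
  | succ j ih =>
    rw [Function.iterate_succ_apply, Function.iterate_succ_apply, ih (contDiff_w1 hf),
      w1_w1bar_comm (hf.of_le ENat.LEInfty.out)]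

end Wirtinger

section Ray

variable {f : ℂ → ℂ} {z₀ : ℂ}

theorem hasDerivAt_comp_add_smul_w1 (a : ℂ) {t : ℝ} (hf : DifferentiableAt ℝ f (z₀ + t • a)) :
    HasDerivAt (fun t : ℝ => f (z₀ + t • a))
      (a * w1 f (z₀ + t • a) + conj a * w1bar f (z₀ + t • a)) t := by
  have hline : HasDerivAt (fun t : ℝ => z₀ + t • a) a t := by
    simpa using ((hasDerivAt_id t).smul_const a).const_add z₀
  have h := hf.hasFDerivAt.comp_hasDerivAt t hline
  rwa [fderiv_apply_eq_w1_add_w1bar] at h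

/-- The `m`-th derivative along a real line is a combination of Wirtinger derivatives of
order `m`. -/
theorem iteratedDeriv_comp_add_smul_eq_zero (hf : ContDiff ℝ ∞ f) {τ : ℕ}
    (hvan : ∀ j k, j + k < τ → (w1^[j] (w1bar^[k] f)) z₀ = 0) (a : ℂ) {m : ℕ} (hm : m < τ) :
    iteratedDeriv m (fun t : ℝ => f (z₀ + t • a)) 0 = 0 := by
  suffices h : ∀ m j k, j + k + m < τ →
      iteratedDeriv m (fun t : ℝ => (w1^[j] (w1bar^[k] f)) (z₀ + t • a)) 0 = 0 from
    h m 0 0 (by omega)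
  intro m
  induction m with
  | zero => intro j k h; simpa using hvan j k h
  | succ m ih =>
    intro j k h
    have hW := contDiff_iterate_w1_iterate_w1bar hf
    have hderiv : deriv (fun t : ℝ => (w1^[j] (w1bar^[k] f)) (z₀ + t • a)) = fun t =>
        a * (w1^[j + 1] (w1bar^[k] f)) (z₀ + t • a)
          + conj a * (w1^[j] (w1bar^[k + 1] f)) (z₀ + t • a) := by
      funext t
      rw [Function.iterate_succ_apply', Function.iterate_succ_apply',
        ← w1bar_iterate_w1 (f := w1bar^[k] f) (hW 0 k) j]
      exact (hasDerivAt_comp_add_smul_w1 a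
        ((hW j k).differentiable (by simp) _)).deriv
    have hline (j k : ℕ) : ContDiff ℝ ∞ fun t : ℝ => (w1^[j] (w1bar^[k] f)) (z₀ + t • a) :=
      (hW j k).comp_add_smul z₀ a
    rw [iteratedDeriv_succ', hderiv,
      iteratedDeriv_fun_add ((contDiff_const.mul (hline _ _)).contDiffAt.of_le ENat.LEInfty.out)
        ((contDiff_const.mul (hline _ _)).contDiffAt.of_le ENat.LEInfty.out),
      iteratedDeriv_const_mul _ ((hline _ _).contDiffAt.of_le ENat.LEInfty.out),
      iteratedDeriv_const_mul _ ((hline _ _).contDiffAt.of_le ENat.LEInfty.out),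
      ih (j + 1) k (by omega), ih j (k + 1) (by omega)]
    ring

end Ray

section Product

variable {G : ℂ × ℂ × ℝ → ℂ}

theorem mem_closedBall_zero_prod {z₁ z₂ : ℂ} {y ρ : ℝ} :
    ((z₁, z₂, y) : ℂ × ℂ × ℝ) ∈ closedBall 0 ρ ↔ ‖z₁‖ ≤ ρ ∧ ‖z₂‖ ≤ ρ ∧ |y| ≤ ρ := by
  simp [Prod.norm_def]

theorem norm_le_of_iterate_w1_iterate_w1bar_eq_zero (hG : ContDiff ℝ ∞ G) {τ : ℕ} {z₁ z₂ : ℂ}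
    (hvan : ∀ j k, j + k < τ → (w1^[j] (w1bar^[k] fun w => G (z₁, w, 0))) 0 = 0) {M : ℝ}
    (hM : ∀ t ∈ Icc (0 : ℝ) 1, ‖iteratedFDeriv ℝ τ G (z₁, t • z₂, 0)‖ ≤ M) :
    ‖G (z₁, z₂, 0)‖ ≤ M * ‖z₂‖ ^ τ := by
  let u : ℂ × ℂ × ℝ := (0, z₂, 0)
  have hline : (fun t : ℝ => G ((z₁, 0, 0) + t • u)) = fun t => G (z₁, 0 + t • z₂, 0) := by
    funext t; simp [u]
  have hu : ‖u‖ = ‖z₂‖ := by simp [u, Prod.norm_def]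
  have h := norm_le_of_iteratedDeriv_eq_zero (τ := τ) (M := M * ‖z₂‖ ^ τ)
    ((hG.comp_add_smul (z₁, 0, 0) u).of_le ENat.LEInfty.out)
    (fun m hm => by
      rw [hline]
      exact iteratedDeriv_comp_add_smul_eq_zero (hG.comp (contDiff_const.prodMk
        (contDiff_id.prodMk contDiff_const))) hvan z₂ hm)
    (fun t ht => by
      refine (norm_iteratedDeriv_comp_add_smul_le hG ENat.LEInfty.out _ u t).trans ?_
      rw [hu]
      gcongr
      simpa [u] using hM t ht)
  simpa [u] using h

theorem exists_norm_le_of_iterate_w1_iterate_w1bar_eq_zero (hG : ContDiff ℝ ∞ G) {τ : ℕ} {ρ : ℝ}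
    (hvan : ∀ z₁ : ℂ, ‖z₁‖ ≤ ρ → ∀ j k, j + k < τ →
      (w1^[j] (w1bar^[k] fun w => G (z₁, w, 0))) 0 = 0) :
    ∃ C > 0, ∀ z₁ z₂ : ℂ, ∀ y : ℝ, ‖z₁‖ ≤ ρ → ‖z₂‖ ≤ ρ → |y| ≤ ρ →
      ‖G (z₁, z₂, y)‖ ≤ C * ‖z₂‖ ^ τ + C * |y| := by
  obtain ⟨M₁, hM₁⟩ := (isCompact_closedBall (0 : ℂ × ℂ × ℝ) ρ).exists_bound_of_continuousOn
    (hG.continuous_fderiv (by simp)).continuousOn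
  obtain ⟨M₂, hM₂⟩ := (isCompact_closedBall (0 : ℂ × ℂ × ℝ) ρ).exists_bound_of_continuousOn
    (hG.continuous_iteratedFDeriv (m := τ) ENat.LEInfty.out).continuousOn
  refine ⟨max (max M₁ M₂) 1, by positivity, fun z₁ z₂ y hz₁ hz₂ hy => ?_⟩
  have hmem {w : ℂ} {y' : ℝ} (hw : ‖w‖ ≤ ‖z₂‖) (hy' : |y'| ≤ |y|) :
      ((z₁, w, y') : ℂ × ℂ × ℝ) ∈ closedBall 0 ρ :=
    mem_closedBall_zero_prod.2 ⟨hz₁, hw.trans hz₂, hy'.trans hy⟩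
  have hy_dir : ‖G (z₁, z₂, y) - G (z₁, z₂, 0)‖ ≤ M₁ * |y| := by
    have h := (convex_closedBall (0 : ℂ × ℂ × ℝ) ρ).norm_image_sub_le_of_norm_fderiv_le
      (fun p _ => (hG.differentiable (by simp)).differentiableAt) hM₁
      (hmem (y' := 0) le_rfl (by simp)) (hmem le_rfl le_rfl)
    simpa [Prod.norm_def] using h
  have hz₂_dir : ‖G (z₁, z₂, 0)‖ ≤ M₂ * ‖z₂‖ ^ τ :=
    norm_le_of_iterate_w1_iterate_w1bar_eq_zero hG (hvan z₁ hz₁) fun t ht => hM₂ _ <| hmem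
      (by rw [norm_smul, Real.norm_of_nonneg ht.1]
          exact mul_le_of_le_one_left (norm_nonneg _) ht.2)
      (by simp)
  calc ‖G (z₁, z₂, y)‖ ≤ ‖G (z₁, z₂, 0)‖ + ‖G (z₁, z₂, y) - G (z₁, z₂, 0)‖ := norm_le_insert' _ _
    _ ≤ M₂ * ‖z₂‖ ^ τ + M₁ * |y| := add_le_add hz₂_dir hy_dir
    _ ≤ _ := by gcongr <;> simp

end Product

theorem iterate_Dz2bar_slice (g : ℂ × ℂ × ℝ → ℂ) (z₁ : ℂ) (y : ℝ) (k : ℕ) :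
    (fun w => (Dz2bar^[k] g) (z₁, w, y)) = w1bar^[k] fun w => g (z₁, w, y) := by
  induction k generalizing g with
  | zero => rfl
  | succ k ih => exact ih (Dz2bar g)

theorem iterate_Dz2_slice (g : ℂ × ℂ × ℝ → ℂ) (z₁ : ℂ) (y : ℝ) (j : ℕ) :
    (fun w => (Dz2^[j] g) (z₁, w, y)) = w1^[j] fun w => g (z₁, w, y) := by
  induction j generalizing g with
  | zero => rfl
  | succ j ih => exact ih (Dz2 g)

theorem mixedD_eq_iterate_w1_iterate_w1bar (φ : ℂ × ℂ × ℝ → ℝ) (j k : ℕ) (z₁ : ℂ) :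
    mixedD φ j k z₁ = (w1^[j] (w1bar^[k] fun w => (φ (z₁, w, 0) : ℂ))) 0 := by
  rw [← iterate_Dz2bar_slice (fun p => (φ p : ℂ)) z₁ 0 k, ← iterate_Dz2_slice _ z₁ 0 j]
  rfl

theorem iterate_w1_iterate_w1bar_eq_mixedD_of_eqOn {Φ : ℂ × ℂ × ℝ → ℂ} {φ : ℂ × ℂ × ℝ → ℝ}
    {ρ : ℝ} (hρ : 0 < ρ) (hΦφ : EqOn Φ (fun p => (φ p : ℂ)) (closedBall 0 ρ)) {z₁ : ℂ}
    (hz₁ : ‖z₁‖ ≤ ρ) (j k : ℕ) :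
    (w1^[j] (w1bar^[k] fun w => Φ (z₁, w, 0))) 0 = mixedD φ j k z₁ := by
  have hslice : (fun w => Φ (z₁, w, 0)) =ᶠ[𝓝 0] fun w => (φ (z₁, w, 0) : ℂ) :=
    eventually_of_mem (ball_mem_nhds 0 hρ) fun w hw =>
      hΦφ (mem_closedBall_zero_prod.2 ⟨hz₁, (mem_ball_zero_iff.1 hw).le, by simpa using hρ.le⟩)
  rw [(iterate_w1_iterate_w1bar_eventuallyEq hslice j k).eq_of_nhds,
    mixedD_eq_iterate_w1_iterate_w1bar]

theorem isOpen_ballCR (s : ℝ) : IsOpen (ballCR s) :=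
  isOpen_lt (by fun_prop) continuous_const

theorem closedBall_subset_ball_prod_ballCR {r s : ℝ} (hr : 0 < r) (hs : 0 < s) :
    closedBall (0 : ℂ × ℂ × ℝ) (min r s / 2) ⊆ ball 0 r ×ˢ ballCR s := by
  rintro ⟨z₁, z₂, y⟩ hp
  obtain ⟨hz₁, hz₂, hy⟩ := mem_closedBall_zero_prod.1 hp
  have hrs := min_le_left r s
  have hsr := min_le_right r s
  refine ⟨mem_ball_zero_iff.2 (by linarith), ?_⟩
  show ‖z₂‖ ^ 2 + y ^ 2 < s ^ 2
  have := lt_min hr hs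
  nlinarith [abs_nonneg y, norm_nonneg z₂, sq_abs y]

theorem norm_lt_and_abs_lt_of_sq_add_sq_lt {z : ℂ} {y ε : ℝ} (hε : 0 ≤ ε)
    (h : ‖z‖ ^ 2 + y ^ 2 < ε ^ 2) : ‖z‖ < ε ∧ |y| < ε :=
  ⟨lt_of_pow_lt_pow_left₀ 2 hε (by nlinarith [sq_nonneg y]),
    lt_of_pow_lt_pow_left₀ 2 hε (by rw [sq_abs]; nlinarith [sq_nonneg ‖z‖])⟩

theorem statement_16_general (r s : ℝ) (hr : 0 < r) (hs : 0 < s) (τ : ℕ)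
    (φ : ℂ × ℂ × ℝ → ℝ)
    (hφsm : ContDiffOn ℝ (⊤ : ℕ∞) φ (Metric.ball (0 : ℂ) r ×ˢ ballCR s))
    (hvan : ∀ z₁ ∈ Metric.ball (0 : ℂ) r, ∀ j k : ℕ, j + k < τ → mixedD φ j k z₁ = 0) :
    ∃ r' : ℝ, 0 < r' ∧ r' ≤ r ∧ ∃ ε > 0, ∃ C > 0,
      (∀ z₂ : ℂ, ∀ y : ℝ, ‖z₂‖ ^ 2 + y ^ 2 < ε ^ 2 → (z₂, y) ∈ ballCR s) ∧
      ∀ z₁ ∈ Metric.ball (0 : ℂ) r', ∀ z₂ : ℂ, ∀ y : ℝ, ‖z₂‖ ^ 2 + y ^ 2 < ε ^ 2 →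
        φ (z₁, z₂, y) ≤ C * ‖z₂‖ ^ τ + C * |y| := by
  set ρ := min r s / 4 with hρ_def
  have hρ : 0 < ρ := by positivity
  have hρr : ρ < r := by linarith [min_le_left r s]
  have hρs : ρ ≤ s := by linarith [min_le_right r s]
  obtain ⟨Φ, hΦ, hΦφ⟩ := exists_contDiff_eqOn_closedBall (isOpen_ball.prod (isOpen_ballCR s))
    (ofRealCLM.contDiff.comp_contDiffOn hφsm) hρ (by linarith : ρ < min r s / 2)
    (closedBall_subset_ball_prod_ballCR hr hs)
  obtain ⟨C, hC, hbound⟩ := exists_norm_le_of_iterate_w1_iterate_w1bar_eq_zero hΦ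
    fun z₁ hz₁ j k hjk => (iterate_w1_iterate_w1bar_eq_mixedD_of_eqOn hρ hΦφ hz₁ j k).trans
      (hvan z₁ (mem_ball_zero_iff.2 (by linarith)) j k hjk)
  refine ⟨ρ, hρ, hρr.le, ρ, hρ, C, hC, fun z₂ y h => ?_, fun z₁ hz₁ z₂ y h => ?_⟩
  · show ‖z₂‖ ^ 2 + y ^ 2 < s ^ 2
    nlinarith
  · obtain ⟨hz₂, hy⟩ := norm_lt_and_abs_lt_of_sq_add_sq_lt hρ.le h
    have hz₁ : ‖z₁‖ ≤ ρ := (mem_ball_zero_iff.1 hz₁).le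
    have hp : ((z₁, z₂, y) : ℂ × ℂ × ℝ) ∈ closedBall 0 ρ :=
      mem_closedBall_zero_prod.2 ⟨hz₁, hz₂.le, hy.le⟩
    calc φ (z₁, z₂, y) ≤ ‖(φ (z₁, z₂, y) : ℂ)‖ := by
          rw [Complex.norm_real, Real.norm_eq_abs]; exact le_abs_self _
      _ = ‖Φ (z₁, z₂, y)‖ := by rw [hΦφ hp]; rfl
      _ ≤ C * ‖z₂‖ ^ τ + C * |y| := hbound z₁ z₂ y hz₁ hz₂.le hy.le

/-- anisotropic Taylor estimate φ(z₁,z₂,y) ≤ C|z₂|^τ + C|y|,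
uniform in z₁ on a smaller disc. -/
theorem statement_16 (r s : ℝ) (hr : 0 < r) (hs : 0 < s) (τ : ℕ) (hτ : 1 ≤ τ)
    (φ : ℂ × ℂ × ℝ → ℝ)
    (hφsm : ContDiffOn ℝ (⊤ : ℕ∞) φ (Metric.ball (0 : ℂ) r ×ˢ ballCR s))
    (hderIm : ∀ z₁ ∈ Metric.ball (0 : ℂ) r, Dy (fun p => (φ p : ℂ)) (z₁, 0, 0) = 0)
    (hvan : ∀ z₁ ∈ Metric.ball (0 : ℂ) r, ∀ j k : ℕ, j + k < τ → mixedD φ j k z₁ = 0) :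
    ∃ r' : ℝ, 0 < r' ∧ r' ≤ r ∧ ∃ ε > 0, ∃ C > 0,
      (∀ z₂ : ℂ, ∀ y : ℝ, ‖z₂‖ ^ 2 + y ^ 2 < ε ^ 2 → (z₂, y) ∈ ballCR s) ∧
      ∀ z₁ ∈ Metric.ball (0 : ℂ) r', ∀ z₂ : ℂ, ∀ y : ℝ, ‖z₂‖ ^ 2 + y ^ 2 < ε ^ 2 →
        φ (z₁, z₂, y) ≤ C * ‖z₂‖ ^ τ + C * |y| :=
  statement_16_general r s hr hs τ φ hφsm hvan

end
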